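/- Let L be a connection on Ω and g a metric on Ω with non-metricity Q and lowered curvature R, and suppose there is a smooth field q : Ω → Sym(3,ℝ) of symmetric 3×3 matrices with Q_{kij} = −2∇_k q_{ij} on Ω, where ∇_k q_{ij} := ∂_k q_{ij} − L^p_{ki} q_{pj} − L^p_{kj} q_{ip}. Then for all indices i,j,k,l and all points of Ω, − R_{jikm} q^m_l − R_{jilm} q^m_k = (1/2)(R_{ijkl} + R_{ijlk}), where q^m_k := g^{im} q_{ik}. -/

import Mathlib

noncomputable section

/-- Points of ℝ³. -/
abbrev E3 := Fin 3 → ℝ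

/-- Partial derivative of `f` along the `j`-th coordinate at `x`. -/
def pd (f : E3 → ℝ) (j : Fin 3) (x : E3) : ℝ :=
  fderiv ℝ f x (Pi.single j 1)

/-- A connection coefficient field: `L x i j k = L^i_{jk}(x)`. -/
abbrev Conn := E3 → Fin 3 → Fin 3 → Fin 3 → ℝ

/-- Smoothness of a connection on `Ω`. -/
def ConnSmooth (L : Conn) (Ω : Set E3) : Prop :=
  ∀ i j k, ContDiffOn ℝ (⊤ : ℕ∞) (fun x => L x i j k) Ω

/-- Torsion of a connection: `torsion L x i j k = T_{jk}^i = (1/2)(L^i_{jk} - L^i_{kj})`. -/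
def torsion (L : Conn) (x : E3) (i j k : Fin 3) : ℝ :=
  (L x i j k - L x i k j) / 2

/-- Curvature of a connection: `curv L x p j i q = R_{jiq}^p`. -/
def curv (L : Conn) (x : E3) (p j i q : Fin 3) : ℝ :=
  pd (fun y => L y p i q) j x - pd (fun y => L y p j q) i x
    + ∑ h, (L x h i q * L x p j h - L x h j q * L x p i h)

/-- A metric field. -/
abbrev Metric := E3 → Matrix (Fin 3) (Fin 3) ℝ

/-- `g` is a metric on `Ω`: smooth entries, symmetric and positive definite on `Ω`. -/
def MetricOn (g : Metric) (Ω : Set E3) : Prop :=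
  (∀ i j, ContDiffOn ℝ (⊤ : ℕ∞) (fun x => g x i j) Ω) ∧
  (∀ x ∈ Ω, (g x).IsSymm) ∧ (∀ x ∈ Ω, (g x).PosDef)

/-- Non-metricity of `(L, g)`: `nm L g x k i j = Q_{kij}`. -/
def nm (L : Conn) (g : Metric) (x : E3) (k i j : Fin 3) : ℝ :=
  - pd (fun y => g y i j) k x + ∑ p, (L x p k j * g x i p + L x p k i * g x j p)

/-- Lowered curvature: `lcurv L g x i j k l = R_{ijkl} = g_{lp} R_{ijk}^p`. -/
def lcurv (L : Conn) (g : Metric) (x : E3) (i j k l : Fin 3) : ℝ :=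
  ∑ p, g x l p * curv L x p i j k

/-- Covariant derivative of a symmetric tensor field `q`:
`covq L q k i j x = ∇_k q_{ij}`. -/
def covq (L : Conn) (q : E3 → Matrix (Fin 3) (Fin 3) ℝ) (k i j : Fin 3) (x : E3) : ℝ :=
  pd (fun y => q y i j) k x - ∑ p, (L x p k i * q x p j + L x p k j * q x i p)

/-- Raised-index quasi-plastic strain `q^m_k = g^{im} q_{ik}`. -/
def qUp (g : Metric) (q : E3 → Matrix (Fin 3) (Fin 3) ℝ) (x : E3) (m k : Fin 3) : ℝ :=
  ∑ i, (g x)⁻¹ i m * q x i k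

/-!
With `h := g - 2q`, the hypothesis `Q = -2∇q` says exactly that `∇h = 0`, since `Q = -∇g` for a
symmetric `g`. Differentiating `∂_i h_{kl} = L^p_{ik} h_{pl} + L^p_{il} h_{kp}` once more and
using `∂_j∂_i = ∂_i∂_j` gives the Ricci identity `R_{jik}^p h_{pl} + R_{jil}^p h_{kp} = 0`: the
curvature lowered with `h` is skew in its last two indices. Splitting `h = g - 2q`, the `g`-part
is `R_{ji(kl)}`, while in `R_{jikm} q^m_l` the factor `g` cancels against `g⁻¹`, leaving the
`q`-part; `R_{ijkl} = -R_{jikl}` finishes.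
-/

open Topology

section PartialDerivatives

variable {f f₁ f₂ : E3 → ℝ} {x : E3}

lemma pd_congr (h : f₁ =ᶠ[𝓝 x] f₂) (j : Fin 3) : pd f₁ j x = pd f₂ j x := by
  rw [pd, pd, h.fderiv_eq]

lemma pd_sub (h₁ : DifferentiableAt ℝ f₁ x) (h₂ : DifferentiableAt ℝ f₂ x) (j : Fin 3) :
    pd (fun y => f₁ y - f₂ y) j x = pd f₁ j x - pd f₂ j x := by
  simp [pd, fderiv_fun_sub h₁ h₂]

lemma pd_add (h₁ : DifferentiableAt ℝ f₁ x) (h₂ : DifferentiableAt ℝ f₂ x) (j : Fin 3) :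
    pd (fun y => f₁ y + f₂ y) j x = pd f₁ j x + pd f₂ j x := by
  simp [pd, fderiv_fun_add h₁ h₂]

lemma pd_mul (h₁ : DifferentiableAt ℝ f₁ x) (h₂ : DifferentiableAt ℝ f₂ x) (j : Fin 3) :
    pd (fun y => f₁ y * f₂ y) j x = pd f₁ j x * f₂ x + f₁ x * pd f₂ j x := by
  simp [pd, fderiv_fun_mul h₁ h₂]
  ring

lemma pd_const_mul (c : ℝ) (h : DifferentiableAt ℝ f x) (j : Fin 3) :
    pd (fun y => c * f y) j x = c * pd f j x := by
  simp [pd, fderiv_const_mul h]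

lemma pd_sum {ι : Type*} (s : Finset ι) {F : ι → E3 → ℝ}
    (h : ∀ i ∈ s, DifferentiableAt ℝ (F i) x) (j : Fin 3) :
    pd (fun y => ∑ i ∈ s, F i y) j x = ∑ i ∈ s, pd (F i) j x := by
  simp [pd, fderiv_fun_sum h]

lemma pd_pd_comm (hf : ContDiffAt ℝ 2 f x) (i j : Fin 3) :
    pd (fun y => pd f i y) j x = pd (fun y => pd f j y) i x := by
  have hf' : DifferentiableAt ℝ (fderiv ℝ f) x :=
    (hf.fderiv_right (m := 1) le_rfl).differentiableAt one_ne_zero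
  have hsnd : ∀ a b : Fin 3, pd (fun y => pd f a y) b x
      = fderiv ℝ (fderiv ℝ f) x (Pi.single b 1) (Pi.single a 1) := by
    intro a b
    simp [pd, fderiv_clm_apply hf' (differentiableAt_const _)]
  rw [hsnd, hsnd, hf.isSymmSndFDerivAt (by simp)]

end PartialDerivatives

open Matrix in
lemma Matrix.mulVec_vecMul_inv_transpose_mul {n R : Type*} [Fintype n] [DecidableEq n]
    [CommRing R] {G : Matrix n n R} (hG : IsUnit G.det) (Q : Matrix n n R) (c : n → R) :
    (G *ᵥ c) ᵥ* (G⁻¹ᵀ * Q) = c ᵥ* Q := by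
  rw [← vecMul_transpose, vecMul_vecMul, ← Matrix.mul_assoc, ← transpose_mul,
    nonsing_inv_mul G hG, transpose_one, Matrix.one_mul]

section Tensors

variable {L : Conn} {g q : Metric} {x : E3}

lemma nm_eq_neg_covq (hg : (g x).IsSymm) (k i j : Fin 3) :
    nm L g x k i j = -covq L g k i j x := by
  simp only [nm, covq, hg.apply j, add_comm (L x _ k j * _)]
  ring

lemma covq_sub_smul (c : ℝ) (hg : ∀ i j, DifferentiableAt ℝ (fun y => g y i j) x)
    (hq : ∀ i j, DifferentiableAt ℝ (fun y => q y i j) x) (k i j : Fin 3) :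
    covq L (fun y => g y - c • q y) k i j x = covq L g k i j x - c * covq L q k i j x := by
  have hsum : ∀ p, L x p k i * (g x p j - c * q x p j) + L x p k j * (g x i p - c * q x i p)
      = (L x p k i * g x p j + L x p k j * g x i p)
        - c * (L x p k i * q x p j + L x p k j * q x i p) := fun p => by ring
  simp only [covq, Matrix.sub_apply, Matrix.smul_apply, smul_eq_mul, hsum,
    pd_sub (hg i j) ((hq i j).const_mul c), pd_const_mul c (hq i j), Finset.sum_sub_distrib,
    ← Finset.mul_sum]
  ring

lemma curv_swap (p i j k : Fin 3) : curv L x p i j k = -curv L x p j i k := by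
  rw [curv, curv, neg_add, ← Finset.sum_neg_distrib]
  simp only [neg_sub]

lemma lcurv_swap (i j k l : Fin 3) : lcurv L g x i j k l = -lcurv L g x j i k l := by
  simp only [lcurv, curv_swap (j := i), mul_neg, neg_neg, Finset.sum_neg_distrib]

lemma lcurv_sub_smul (c : ℝ) (i j k l : Fin 3) :
    lcurv L (fun y => g y - c • q y) x i j k l = lcurv L g x i j k l - c * lcurv L q x i j k l := by
  simp only [lcurv, Matrix.sub_apply, Matrix.smul_apply, smul_eq_mul, sub_mul, mul_assoc,
    Finset.sum_sub_distrib, Finset.mul_sum]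

lemma sum_lcurv_mul_qUp (hg : IsUnit (g x).det) (hq : (q x).IsSymm) (i j k l : Fin 3) :
    ∑ m, lcurv L g x i j k m * qUp g q x m l = lcurv L q x i j k l := by
  convert congrFun (Matrix.mulVec_vecMul_inv_transpose_mul hg (q x) (curv L x · i j k)) l using 1
  · rfl
  · simp only [Matrix.vecMul, dotProduct, lcurv, hq.apply, mul_comm]

lemma covq_sub_two_smul_eq_zero (hg : (g x).IsSymm)
    (hgd : ∀ i j, DifferentiableAt ℝ (fun y => g y i j) x)
    (hqd : ∀ i j, DifferentiableAt ℝ (fun y => q y i j) x) {k i j : Fin 3}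
    (hrep : nm L g x k i j = -2 * covq L q k i j x) :
    covq L (fun y => g y - (2 : ℝ) • q y) k i j x = 0 := by
  rw [covq_sub_smul 2 hgd hqd, ← neg_neg (covq L g k i j x), ← nm_eq_neg_covq hg, hrep]
  ring

end Tensors

section RicciIdentity

variable {L : Conn} {h : Metric} {x : E3}

lemma pd_pd_of_covq_eq_zero (hL : ∀ p a b, DifferentiableAt ℝ (fun y => L y p a b) x)
    (hh : ∀ a b, DifferentiableAt ℝ (fun y => h y a b) x)
    (hpar : ∀ᶠ y in 𝓝 x, ∀ k a b, covq L h k a b y = 0) (i j k l : Fin 3) :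
    pd (fun y => pd (fun z => h z k l) i y) j x
      = ∑ p, (pd (fun y => L y p i k) j x * h x p l
          + L x p i k * ∑ r, (L x r j p * h x r l + L x r j l * h x p r)
          + (pd (fun y => L y p i l) j x * h x k p
          + L x p i l * ∑ r, (L x r j k * h x r p + L x r j p * h x k r))) := by
  have hfirst : ∀ᶠ y in 𝓝 x, ∀ k a b, pd (fun z => h z a b) k y
      = ∑ p, (L y p k a * h y p b + L y p k b * h y a p) :=
    hpar.mono fun y hy k a b => sub_eq_zero.mp (hy k a b)
  rw [pd_congr (hfirst.mono fun y hy => hy i k l) j,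
    pd_sum (F := fun p y => L y p i k * h y p l + L y p i l * h y k p) _
      (fun p _ => ((hL p i k).fun_mul (hh p l)).fun_add ((hL p i l).fun_mul (hh k p)))]
  refine Finset.sum_congr rfl fun p _ => ?_
  rw [pd_add ((hL p i k).fun_mul (hh p l)) ((hL p i l).fun_mul (hh k p)),
    pd_mul (hL p i k) (hh p l), pd_mul (hL p i l) (hh k p),
    hfirst.self_of_nhds j p l, hfirst.self_of_nhds j k p]

lemma sum_curv_mul_add_sum_curv_mul_eq_zero
    (hL : ∀ p a b, DifferentiableAt ℝ (fun y => L y p a b) x)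
    (hh : ∀ a b, ContDiffAt ℝ 2 (fun y => h y a b) x)
    (hpar : ∀ᶠ y in 𝓝 x, ∀ k a b, covq L h k a b y = 0) (i j k l : Fin 3) :
    ∑ p, curv L x p j i k * h x p l + ∑ p, curv L x p j i l * h x k p = 0 := by
  have hcomm := pd_pd_comm (hh k l) i j
  have hh' : ∀ a b, DifferentiableAt ℝ (fun y => h y a b) x :=
    fun a b => (hh a b).differentiableAt two_ne_zero
  rw [pd_pd_of_covq_eq_zero hL hh' hpar, pd_pd_of_covq_eq_zero hL hh' hpar] at hcomm
  simp only [curv, Fin.sum_univ_three] at hcomm ⊢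
  linear_combination hcomm

lemma lcurv_add_lcurv_swap_eq_zero (hL : ∀ p a b, DifferentiableAt ℝ (fun y => L y p a b) x)
    (hh : ∀ a b, ContDiffAt ℝ 2 (fun y => h y a b) x)
    (hpar : ∀ᶠ y in 𝓝 x, ∀ k a b, covq L h k a b y = 0) (hs : (h x).IsSymm) (i j k l : Fin 3) :
    lcurv L h x i j k l + lcurv L h x i j l k = 0 := by
  simpa only [lcurv, hs.apply l, mul_comm] using
    sum_curv_mul_add_sum_curv_mul_eq_zero hL hh hpar j i k l

end RicciIdentity

theorem quasi_plastic_strain_curvature_identity_general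
    (Ω : Set E3) (hΩ : IsOpen Ω)
    (L : Conn) (hL : ConnSmooth L Ω) (g : Metric) (hg : MetricOn g Ω)
    (q : E3 → Matrix (Fin 3) (Fin 3) ℝ)
    (hqsmooth : ∀ i j, ContDiffOn ℝ (⊤ : ℕ∞) (fun x => q x i j) Ω)
    (hqsym : ∀ x ∈ Ω, (q x).IsSymm)
    (hrep : ∀ x ∈ Ω, ∀ k i j : Fin 3, nm L g x k i j = -2 * covq L q k i j x) :
    ∀ x ∈ Ω, ∀ i j k l : Fin 3,
      -(∑ m, lcurv L g x j i k m * qUp g q x m l)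
        - (∑ m, lcurv L g x j i l m * qUp g q x m k)
        = (1 / 2) * (lcurv L g x i j k l + lcurv L g x i j l k) := by
  obtain ⟨hgsmooth, hgsym, hgpos⟩ := hg
  have hcd : ∀ {f : E3 → ℝ}, ContDiffOn ℝ (⊤ : ℕ∞) f Ω → ∀ y ∈ Ω, ContDiffAt ℝ 2 f y :=
    fun hf y hy => (hf.contDiffAt (hΩ.mem_nhds hy)).of_le (by norm_cast)
  have hd : ∀ {f : E3 → ℝ}, ContDiffOn ℝ (⊤ : ℕ∞) f Ω → ∀ y ∈ Ω, DifferentiableAt ℝ f y :=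
    fun hf y hy => (hcd hf y hy).differentiableAt two_ne_zero
  intro x hx i j k l
  have hpar : ∀ᶠ y in 𝓝 x, ∀ k a b, covq L (fun z => g z - (2 : ℝ) • q z) k a b y = 0 := by
    filter_upwards [hΩ.mem_nhds hx] with y hy k a b
    exact covq_sub_two_smul_eq_zero (hgsym y hy) (fun a b => hd (hgsmooth a b) y hy)
      (fun a b => hd (hqsmooth a b) y hy) (hrep y hy k a b)
  have hskew := lcurv_add_lcurv_swap_eq_zero (h := fun z => g z - (2 : ℝ) • q z)
    (fun p a b => hd (hL p a b) x hx)
    (fun a b => hcd ((hgsmooth a b).sub ((hqsmooth a b).const_smul (2 : ℝ))) x hx) hpar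
    ((hgsym x hx).sub ((hqsym x hx).smul (2 : ℝ))) j i k l
  rw [lcurv_sub_smul, lcurv_sub_smul] at hskew
  have hdet : IsUnit (g x).det := (Matrix.isUnit_iff_isUnit_det _).mp (hgpos x hx).isUnit
  rw [sum_lcurv_mul_qUp hdet (hqsym x hx), sum_lcurv_mul_qUp hdet (hqsym x hx),
    lcurv_swap i j, lcurv_swap i j]
  linear_combination (1 / 2) * hskew

/-- Inserting `Q_{kij} = -2∇_k q_{ij}` into the third Bianchi–Padova relation gives
`-R_{jikm} q^m_l - R_{jilm} q^m_k = R_{ij(kl)}`. -/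
theorem quasi_plastic_strain_curvature_identity
    (Ω : Set E3) (hΩ : IsOpen Ω) (hne : Ω.Nonempty)
    (L : Conn) (hL : ConnSmooth L Ω) (g : Metric) (hg : MetricOn g Ω)
    (q : E3 → Matrix (Fin 3) (Fin 3) ℝ)
    (hqsmooth : ∀ i j, ContDiffOn ℝ (⊤ : ℕ∞) (fun x => q x i j) Ω)
    (hqsym : ∀ x ∈ Ω, (q x).IsSymm)
    (hrep : ∀ x ∈ Ω, ∀ k i j : Fin 3, nm L g x k i j = -2 * covq L q k i j x) :
    ∀ x ∈ Ω, ∀ i j k l : Fin 3,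
      -(∑ m, lcurv L g x j i k m * qUp g q x m l)
        - (∑ m, lcurv L g x j i l m * qUp g q x m k)
        = (1 / 2) * (lcurv L g x i j k l + lcurv L g x i j l k) :=
  quasi_plastic_strain_curvature_identity_general Ω hΩ L hL g hg q hqsmooth hqsym hrep
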